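/- Under the same hypotheses as the previous statement, there exists a constant c such that lim_{τ→0⁻} (γ̃ f'(τ) τ − 1)/τ² = c. -/

import Mathlib

/-!
With `g = exp (γ̃ f)` we have `g' = γ̃ f' g` and `g'' = γ̃ (f'' + γ̃ f'²) g`, so `g → 0`,
`g' → -γ̃ √m ≠ 0` and `g'' = k g` with `k → γ̃ L`. The quantity of interest is
`(γ̃ f' τ τ - 1) / τ² = (g' τ τ - g τ) / (g τ τ²)`. By L'Hôpital `g τ / τ → g'(0⁻)`, and a second
application to `(g' τ τ - g τ) / τ³`, whose derivative quotient is `g'' τ / (3 τ) = k (g / τ) / 3`,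
gives the limit `γ̃ L / 3`.
-/

open Filter Set Topology

section LHopital

variable {g g' g'' : ℝ → ℝ} {b : ℝ}

theorem tendsto_div_nhdsLT_zero_of_hasDerivAt (hg : ∀ᶠ x in 𝓝[<] 0, HasDerivAt g (g' x) x)
    (hg0 : Tendsto g (𝓝[<] 0) (𝓝 0)) (hg' : Tendsto g' (𝓝[<] 0) (𝓝 b)) :
    Tendsto (fun x => g x / x) (𝓝[<] 0) (𝓝 b) :=
  HasDerivAt.lhopital_zero_nhdsLT hg (.of_forall hasDerivAt_id) (.of_forall fun _ => one_ne_zero)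
    hg0 nhdsWithin_le_nhds (by simpa using hg')

theorem tendsto_deriv_mul_sub_div_cube_nhdsLT_zero {c : ℝ}
    (hg : ∀ᶠ x in 𝓝[<] 0, HasDerivAt g (g' x) x) (hg' : ∀ᶠ x in 𝓝[<] 0, HasDerivAt g' (g'' x) x)
    (hg0 : Tendsto g (𝓝[<] 0) (𝓝 0)) (hg'b : Tendsto g' (𝓝[<] 0) (𝓝 b))
    (hg'' : Tendsto (fun x => g'' x / x) (𝓝[<] 0) (𝓝 c)) :
    Tendsto (fun x => (g' x * x - g x) / x ^ 3) (𝓝[<] 0) (𝓝 (c / 3)) := by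
  have hid : Tendsto (fun x : ℝ => x) (𝓝[<] 0) (𝓝 0) := nhdsWithin_le_nhds
  have hneg : ∀ᶠ x in 𝓝[<] (0 : ℝ), x < 0 := self_mem_nhdsWithin
  refine HasDerivAt.lhopital_zero_nhdsLT (f' := fun x => g'' x * x) (g' := fun x => 3 * x ^ 2)
    ?_ (.of_forall fun x => by simpa using hasDerivAt_pow 3 x) ?_ ?_ ?_ ?_
  · filter_upwards [hg, hg'] with x hgx hg'x
    exact ((hg'x.mul (hasDerivAt_id x)).sub hgx).congr_deriv (by simp)
  · filter_upwards [hneg] with x hx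
    have := hx.ne
    positivity
  · simpa using (hg'b.mul hid).sub hg0
  · simpa using hid.pow 3
  · refine (hg''.div_const 3).congr' ?_
    filter_upwards [hneg] with x hx
    field_simp [hx.ne]

theorem tendsto_deriv_mul_sub_div_mul_sq_nhdsLT_zero {k : ℝ → ℝ} {K : ℝ}
    (hg : ∀ᶠ x in 𝓝[<] 0, HasDerivAt g (g' x) x)
    (hg' : ∀ᶠ x in 𝓝[<] 0, HasDerivAt g' (k x * g x) x)
    (hg0 : Tendsto g (𝓝[<] 0) (𝓝 0)) (hg'b : Tendsto g' (𝓝[<] 0) (𝓝 b)) (hb : b ≠ 0)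
    (hk : Tendsto k (𝓝[<] 0) (𝓝 K)) :
    Tendsto (fun x => (g' x * x - g x) / (g x * x ^ 2)) (𝓝[<] 0) (𝓝 (K / 3)) := by
  have hratio := tendsto_div_nhdsLT_zero_of_hasDerivAt hg hg0 hg'b
  have hcube := tendsto_deriv_mul_sub_div_cube_nhdsLT_zero hg hg' hg0 hg'b
    (by simpa only [mul_div_assoc] using hk.mul hratio)
  have hratio_ne : ∀ᶠ x in 𝓝[<] 0, g x / x ≠ 0 := hratio.eventually_ne hb
  have hlim : K * b / 3 * b⁻¹ = K / 3 := by field_simp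
  rw [← hlim]
  refine (hcube.mul (hratio.inv₀ hb)).congr' ?_
  filter_upwards [hratio_ne, self_mem_nhdsWithin] with x hx (hx0 : x < 0)
  have hgx : g x ≠ 0 := fun h => hx (by simp [h])
  field_simp [hx0.ne, hgx]

end LHopital

theorem tendsto_neg_sqrt_of_tendsto_sq {α : Type*} {l : Filter α} {u : α → ℝ} {m : ℝ}
    (hu : ∀ᶠ x in l, u x < 0) (hsq : Tendsto (fun x => u x ^ 2) l (𝓝 m)) :
    Tendsto u l (𝓝 (-√m)) := by
  refine hsq.sqrt.neg.congr' ?_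
  filter_upwards [hu] with x hx
  rw [Real.sqrt_sq_eq_abs, abs_of_neg hx, neg_neg]

theorem ContDiffOn.hasDerivAt_deriv_deriv {f : ℝ → ℝ} {s : Set ℝ} {x : ℝ}
    (hf : ContDiffOn ℝ 2 f s) (hs : IsOpen s) (hx : x ∈ s) :
    HasDerivAt f (deriv f x) x ∧ HasDerivAt (deriv f) (deriv (deriv f) x) x := by
  have hf' : ContDiffOn ℝ 1 (deriv f) s := hf.deriv_of_isOpen hs (by norm_num)
  exact ⟨((hf.differentiableOn two_ne_zero).differentiableAt (hs.mem_nhds hx)).hasDerivAt,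
    ((hf'.differentiableOn one_ne_zero).differentiableAt (hs.mem_nhds hx)).hasDerivAt⟩

section ExpComp

variable {f f' : ℝ → ℝ} {γ x : ℝ}

theorem hasDerivAt_exp_const_mul_comp (hf : HasDerivAt f (f' x) x) :
    HasDerivAt (fun y => Real.exp (γ * f y)) (γ * f' x * Real.exp (γ * f x)) x :=
  (hf.const_mul γ).exp.congr_deriv (by ring)

theorem hasDerivAt_mul_exp_const_mul_comp {f'' : ℝ} (hf : HasDerivAt f (f' x) x)
    (hf' : HasDerivAt f' f'' x) :
    HasDerivAt (fun y => γ * f' y * Real.exp (γ * f y))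
      (γ * (f'' + γ * f' x ^ 2) * Real.exp (γ * f x)) x :=
  ((hf'.const_mul γ).mul (hasDerivAt_exp_const_mul_comp hf)).congr_deriv (by ring)

end ExpComp

/-- Under the same hypotheses, there is a constant `c` with
`(γtil f'(τ) τ − 1)/τ² → c` as `τ → 0⁻`. -/
theorem asymptotic_relation_for_f_prime (a : ℝ) (ha : a < 0) (f : ℝ → ℝ) (γtil m : ℝ)
    (hγtil : 0 < γtil) (hm : 0 < m)
    (hf : ContDiffOn ℝ 2 f (Set.Ico a 0))
    (hf' : ∀ τ ∈ Set.Ico a (0:ℝ), deriv f τ < 0)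
    (h1 : Filter.Tendsto f (nhdsWithin 0 (Set.Iio 0)) Filter.atBot)
    (h2 : Filter.Tendsto (fun τ : ℝ => (deriv f τ) ^ 2 * Real.exp (2 * γtil * f τ))
      (nhdsWithin 0 (Set.Iio 0)) (nhds m))
    (h3 : ∃ L : ℝ, Filter.Tendsto (fun τ : ℝ => deriv (deriv f) τ + γtil * (deriv f τ) ^ 2)
      (nhdsWithin 0 (Set.Iio 0)) (nhds L)) :
    ∃ c : ℝ, Filter.Tendsto (fun τ : ℝ => (γtil * deriv f τ * τ - 1) / τ ^ 2)
      (nhdsWithin 0 (Set.Iio 0)) (nhds c) := by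
  obtain ⟨L, hL⟩ := h3
  have hIoo : ∀ᶠ τ in 𝓝[<] 0, τ ∈ Ioo a 0 := Ioo_mem_nhdsLT ha
  have hderivs := fun τ (hτ : τ ∈ Ioo a 0) =>
    (hf.mono Ioo_subset_Ico_self).hasDerivAt_deriv_deriv isOpen_Ioo hτ
  have hexp : Tendsto (fun τ => Real.exp (γtil * f τ)) (𝓝[<] 0) (𝓝 0) :=
    Real.tendsto_exp_atBot.comp (h1.const_mul_atBot hγtil)
  have hslope : Tendsto (fun τ => deriv f τ * Real.exp (γtil * f τ)) (𝓝[<] 0) (𝓝 (-√m)) := by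
    refine tendsto_neg_sqrt_of_tendsto_sq ?_ (h2.congr fun τ => ?_)
    · filter_upwards [hIoo] with τ hτ
      exact mul_neg_of_neg_of_pos (hf' τ (Ioo_subset_Ico_self hτ)) (Real.exp_pos _)
    · rw [mul_pow, ← Real.exp_nat_mul]; ring_nf
  have hquot := tendsto_deriv_mul_sub_div_mul_sq_nhdsLT_zero
    (hIoo.mono fun τ hτ => hasDerivAt_exp_const_mul_comp (γ := γtil) (hderivs τ hτ).1)
    (hIoo.mono fun τ hτ =>
      hasDerivAt_mul_exp_const_mul_comp (hderivs τ hτ).1 (hderivs τ hτ).2)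
    hexp (by simpa only [mul_assoc] using hslope.const_mul γtil)
    (mul_ne_zero hγtil.ne' (neg_ne_zero.2 (Real.sqrt_pos.2 hm).ne')) (hL.const_mul γtil)
  refine ⟨γtil * L / 3, hquot.congr fun τ => ?_⟩
  have := (Real.exp_pos (γtil * f τ)).ne'
  field_simp
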